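/- arXiv:1208.2116 — 2 statements merged into one kernel-verified Lean document; each statement's English description precedes it below -/
import Mathlib

section
/- For γ ≥ 0, there exists a unique γ₃₀ ≥ 0 such that C(γ₃₀) + C((√γ + √γ₃₀)²) = 2·C(γ), where C(x) = log₂(1+x), and moreover γ₃₀ ≤ γ. -/
/-! The left-hand side is continuous and strictly increasing in γ₃₀. At γ₃₀ = 0 it equals
C(γ) ≤ 2C(γ), and at γ₃₀ = γ it equals C(γ) + C(4γ) ≥ 2C(γ), so the intermediate value theorem
places the unique solution in [0, γ]. -/

open Real Set

theorem existsUnique_eq_of_strictMonoOn_Icc {α δ : Type*} [ConditionallyCompleteLinearOrder α]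
    [TopologicalSpace α] [OrderTopology α] [DenselyOrdered α] [LinearOrder δ]
    [TopologicalSpace δ] [OrderClosedTopology δ] {f : α → δ} {a b : α} {c : δ} (hab : a ≤ b)
    (hcont : ContinuousOn f (Icc a b)) (hmono : StrictMonoOn f (Icc a b))
    (hfa : f a ≤ c) (hfb : c ≤ f b) :
    ∃! x, a ≤ x ∧ f x = c ∧ x ≤ b := by
  obtain ⟨x, hx, hfx⟩ := intermediate_value_Icc hab hcont ⟨hfa, hfb⟩
  refine ⟨x, ⟨hx.1, hfx, hx.2⟩, ?_⟩
  rintro y ⟨hay, hfy, hyb⟩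
  exact hmono.injOn ⟨hay, hyb⟩ hx (hfy.trans hfx.symm)

theorem strictMonoOn_logb_one_add {b : ℝ} (hb : 1 < b) :
    StrictMonoOn (fun x => logb b (1 + x)) (Ioi (-1)) := fun x hx _ _ hxy =>
  logb_lt_logb hb (by linarith [mem_Ioi.mp hx]) (by linarith)

theorem strictMonoOn_sqrt_add_sqrt_sq (a : ℝ) :
    StrictMonoOn (fun x => (√a + √x) ^ 2) (Ici 0) := fun x hx _ _ hxy =>
  pow_lt_pow_left₀ (add_lt_add_right (sqrt_lt_sqrt hx hxy) _) (by positivity) two_ne_zero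

noncomputable def rateSum (γ x : ℝ) : ℝ :=
  logb 2 (1 + x) + logb 2 (1 + (√γ + √x) ^ 2)

theorem strictMonoOn_rateSum (γ : ℝ) : StrictMonoOn (rateSum γ) (Ici 0) := by
  have hlog := (strictMonoOn_logb_one_add one_lt_two).mono
    (Ici_subset_Ioi.mpr (by norm_num : (-1 : ℝ) < 0))
  exact hlog.add (hlog.comp (strictMonoOn_sqrt_add_sqrt_sq γ)
    fun x _ => mem_Ici.mpr (sq_nonneg _))

theorem continuousOn_rateSum (γ : ℝ) : ContinuousOn (rateSum γ) (Ici 0) := by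
  refine (continuousOn_logb.comp (by fun_prop) ?_).add (continuousOn_logb.comp (by fun_prop) ?_)
  · exact fun x (hx : 0 ≤ x) => by simp only [mem_compl_iff, mem_singleton_iff]; linarith
  · exact fun x _ => by simp only [mem_compl_iff, mem_singleton_iff]; positivity

theorem rateSum_zero {γ : ℝ} (hγ : 0 ≤ γ) : rateSum γ 0 = logb 2 (1 + γ) := by
  simp [rateSum, sq_sqrt hγ]

theorem two_mul_logb_le_rateSum_self {γ : ℝ} (hγ : 0 ≤ γ) :
    2 * logb 2 (1 + γ) ≤ rateSum γ γ := by
  have h4γ : (√γ + √γ) ^ 2 = 4 * γ := by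
    nlinarith [sq_sqrt hγ]
  have : logb 2 (1 + γ) ≤ logb 2 (1 + 4 * γ) :=
    logb_le_logb_of_le one_lt_two (by linarith) (by linarith)
  rw [rateSum, h4γ]
  linarith

/-- For γ ≥ 0, there is a unique γ₃₀ ≥ 0 with
C(γ₃₀) + C((√γ + √γ₃₀)²) = 2C(γ), and moreover γ₃₀ ≤ γ. -/
theorem threshold_exists_unique (γ : ℝ) (hγ : 0 ≤ γ) :
    ∃! γ₃₀ : ℝ, 0 ≤ γ₃₀ ∧
      Real.logb 2 (1 + γ₃₀) + Real.logb 2 (1 + (Real.sqrt γ + Real.sqrt γ₃₀) ^ 2)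
        = 2 * Real.logb 2 (1 + γ) ∧
      γ₃₀ ≤ γ := by
  have hC : 0 ≤ logb 2 (1 + γ) := logb_nonneg one_lt_two (by linarith)
  have hlow : rateSum γ 0 ≤ 2 * logb 2 (1 + γ) := by
    rw [rateSum_zero hγ]
    linarith
  exact existsUnique_eq_of_strictMonoOn_Icc hγ ((continuousOn_rateSum γ).mono Icc_subset_Ici_self)
    ((strictMonoOn_rateSum γ).mono Icc_subset_Ici_self) hlow (two_mul_logb_le_rateSum_self hγ)
end

section
/- Let k ≥ 1 and γ₁, γ₂ > 0, γ₃ ≥ 0, C(x) = log₂(1+x), S = C(γ₁)+C(γ₂). Define y₁ = ((2k-1)/(2k²))·C(γ₂)/S, y₂ = ((2k-1)/(2k²))·C(γ₁)/S, y₃ = (1/(2k))·C(γ₁)/S, y₄ = (1/(2k))·C(γ₂)/S, and y₅ = max{T₁,T₂,T₃,T₄} where T₁ = ((3k-1)/(2k²))·C(γ₁)C(γ₂)/S, T₂ = ((2k-1)/(2k²))·(C(γ₂)C(γ₁+γ₃)+C(γ₁)C(γ₃))/S, T₃ = ((2k-1)/(2k²))·(C(γ₂)C(γ₃)+C(γ₁)C((√γ₂+√γ₃)²))/S,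 T₄ = (1/(2k))·(C(γ₁)C(γ₃)+C(γ₂)C((√γ₁+√γ₃)²))/S. Then (y₁,…,y₅) satisfies all seven dual constraints: y₅ ≥ y₁C(γ₁+γ₃)+y₂C(γ₃); y₅ ≥ y₃C(γ₂+γ₃)+y₄C(γ₃); y₅ ≥ y₁C(γ₁)+y₃C(γ₂); y₅ ≥ y₂C(γ₂)+y₄C(γ₁); y₅ ≥ y₁C(γ₃)+y₂C((√γ₂+√γ₃)²); y₅ ≥ y₃C(γ₃)+y₄C((√γ₁+√γ₃)²); k(y₁+y₂)+y₃+y₄ ≥ 1. -/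
/-!
Every constraint except the second is met with equality by one of `T₁, …, T₄` or by `1`,
using `(2k-1)/(2k²) + 1/(2k) = (3k-1)/(2k²)` and `k·(2k-1)/(2k²) + 1/(2k) = 1`.
The second is bounded by `T₃`: since `γ₂ + γ₃ ≤ (√γ₂ + √γ₃)²` and `C` is monotone, replacing
`C(γ₂+γ₃)` by `C((√γ₂+√γ₃)²)` only increases it, and `1/(2k) ≤ (2k-1)/(2k²)` for `k ≥ 1`.
-/

open Real

lemma add_le_sq_sqrt_add_sqrt {a b : ℝ} (ha : 0 ≤ a) (hb : 0 ≤ b) : a + b ≤ (√a + √b) ^ 2 := by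
  rw [add_sq, sq_sqrt ha, sq_sqrt hb]
  nlinarith [mul_nonneg (sqrt_nonneg a) (sqrt_nonneg b)]

section Coefficients

variable {k : ℝ}

lemma coeff_add_inv_two_mul (hk : k ≠ 0) :
    (2 * k - 1) / (2 * k ^ 2) + 1 / (2 * k) = (3 * k - 1) / (2 * k ^ 2) := by
  field_simp
  ring

lemma mul_coeff_add_inv_two_mul (hk : k ≠ 0) :
    k * ((2 * k - 1) / (2 * k ^ 2)) + 1 / (2 * k) = 1 := by
  field_simp
  ring

lemma inv_two_mul_le_coeff (hk : 1 ≤ k) : 1 / (2 * k) ≤ (2 * k - 1) / (2 * k ^ 2) := by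
  rw [div_le_div_iff₀ (by positivity) (by positivity)]
  nlinarith

end Coefficients

lemma mixed_constraint_le {a b S c₁ c₂ c₃ c₂₃ d₂ : ℝ} (hba : b ≤ a) (hb : 0 ≤ b) (hS : 0 < S)
    (hc₁ : 0 ≤ c₁) (hc₂ : 0 ≤ c₂) (hc₃ : 0 ≤ c₃) (hd₂ : 0 ≤ d₂) (hc₂₃ : c₂₃ ≤ d₂) :
    b * c₁ / S * c₂₃ + b * c₂ / S * c₃ ≤ a * (c₂ * c₃ + c₁ * d₂) / S :=
  calc b * c₁ / S * c₂₃ + b * c₂ / S * c₃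
      ≤ b * c₁ / S * d₂ + b * c₂ / S * c₃ := by gcongr
    _ = b * (c₂ * c₃ + c₁ * d₂) / S := by ring
    _ ≤ a * (c₂ * c₃ + c₁ * d₂) / S := by gcongr

/-- Dual feasibility of the specific dual variables of Theorem 4. -/
theorem dual_feasibility (γ₁ γ₂ γ₃ k : ℝ) (h1 : 0 < γ₁) (h2 : 0 < γ₂) (h3 : 0 ≤ γ₃)
    (hk : 1 ≤ k)
    (C : ℝ → ℝ) (hC : C = fun x => Real.logb 2 (1 + x))
    (S : ℝ) (hS : S = C γ₁ + C γ₂)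
    (y₁ y₂ y₃ y₄ y₅ T₁ T₂ T₃ T₄ : ℝ)
    (hy1 : y₁ = ((2 * k - 1) / (2 * k ^ 2)) * C γ₂ / S)
    (hy2 : y₂ = ((2 * k - 1) / (2 * k ^ 2)) * C γ₁ / S)
    (hy3 : y₃ = (1 / (2 * k)) * C γ₁ / S)
    (hy4 : y₄ = (1 / (2 * k)) * C γ₂ / S)
    (hT1 : T₁ = ((3 * k - 1) / (2 * k ^ 2)) * (C γ₁ * C γ₂) / S)
    (hT2 : T₂ = ((2 * k - 1) / (2 * k ^ 2)) * (C γ₂ * C (γ₁ + γ₃) + C γ₁ * C γ₃) / S)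
    (hT3 : T₃ = ((2 * k - 1) / (2 * k ^ 2)) *
      (C γ₂ * C γ₃ + C γ₁ * C ((Real.sqrt γ₂ + Real.sqrt γ₃) ^ 2)) / S)
    (hT4 : T₄ = (1 / (2 * k)) *
      (C γ₁ * C γ₃ + C γ₂ * C ((Real.sqrt γ₁ + Real.sqrt γ₃) ^ 2)) / S)
    (hy5 : y₅ = max (max T₁ T₂) (max T₃ T₄)) :
    y₁ * C (γ₁ + γ₃) + y₂ * C γ₃ ≤ y₅ ∧
    y₃ * C (γ₂ + γ₃) + y₄ * C γ₃ ≤ y₅ ∧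
    y₁ * C γ₁ + y₃ * C γ₂ ≤ y₅ ∧
    y₂ * C γ₂ + y₄ * C γ₁ ≤ y₅ ∧
    y₁ * C γ₃ + y₂ * C ((Real.sqrt γ₂ + Real.sqrt γ₃) ^ 2) ≤ y₅ ∧
    y₃ * C γ₃ + y₄ * C ((Real.sqrt γ₁ + Real.sqrt γ₃) ^ 2) ≤ y₅ ∧
    1 ≤ k * (y₁ + y₂) + y₃ + y₄ := by
  have hk0 : k ≠ 0 := by positivity
  have hC0 {x : ℝ} (hx : 0 ≤ x) : 0 ≤ C x := hC ▸ logb_nonneg one_lt_two (by linarith)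
  have hC12 : 0 < C γ₁ + C γ₂ := add_pos_of_pos_of_nonneg
    (hC ▸ logb_pos one_lt_two (by linarith)) (hC0 h2.le)
  have hCsq : C (γ₂ + γ₃) ≤ C ((√γ₂ + √γ₃) ^ 2) :=
    hC ▸ logb_le_logb_of_le one_lt_two (by linarith) (by linarith [add_le_sq_sqrt_add_sqrt h2.le h3])
  obtain ⟨hT1y, hT2y, hT3y, hT4y⟩ : T₁ ≤ y₅ ∧ T₂ ≤ y₅ ∧ T₃ ≤ y₅ ∧ T₄ ≤ y₅ := by
    simp only [hy5, le_max_iff, le_refl, or_true, true_or, and_self]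
  subst hy1 hy2 hy3 hy4 hT1 hT2 hT3 hT4
  refine ⟨le_of_eq_of_le (by ring) hT2y, ?_, le_of_eq_of_le ?_ hT1y, le_of_eq_of_le ?_ hT1y,
    le_of_eq_of_le (by ring) hT3y, le_of_eq_of_le (by ring) hT4y, ge_of_eq ?_⟩
  · exact (mixed_constraint_le (inv_two_mul_le_coeff hk) (by positivity) (hS ▸ hC12)
      (hC0 h1.le) (hC0 h2.le) (hC0 h3) (hC0 (by positivity)) hCsq).trans hT3y
  · rw [← coeff_add_inv_two_mul hk0]; ring
  · rw [← coeff_add_inv_two_mul hk0]; ring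
  · calc k * ((2 * k - 1) / (2 * k ^ 2) * C γ₂ / S + (2 * k - 1) / (2 * k ^ 2) * C γ₁ / S)
          + 1 / (2 * k) * C γ₁ / S + 1 / (2 * k) * C γ₂ / S
        = (k * ((2 * k - 1) / (2 * k ^ 2)) + 1 / (2 * k)) * ((C γ₁ + C γ₂) / S) := by ring
      _ = 1 := by rw [mul_coeff_add_inv_two_mul hk0, ← hS, div_self (hS ▸ hC12).ne', one_mul]
end
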